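/- Let α ∈ (0,1), let k be a nonzero integer, let c₀, c₁ ∈ ℂ, and let φ : (0,∞) → ℂ satisfy φ(x) = o(x^{3/2}) as x → 0⁺. Set g = φ + c₁·Ψ_{α,k} + c₀·Φ_{α,k}, g₀ = c₀·√(π(1+α)/(2|k|)) and g₁ = c₁·√(2|k|/(π(1+α)³))·‖Φ_{α,k}‖²_{L²(0,∞)} − c₀·√(π|k|/(2(1+α))). Then lim_{x→0⁺} x^{α/2}·g(x) = g₀, lim_{x→0⁺} x^{−(1+α/2)}·(g(x) − g₀·x^{−α/2}) = g₁, and g(x) = g₀·x^{−α/2} + g₁·x^{1+α/2} + o(x^{3/2}) as x → 0⁺. -/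

import Mathlib

/-!
With `u = |k| x^{1+α}/(1+α)` we have `Φ = c_Φ x^{-α/2} e^{-u}` and `F = c_F x^{-α/2} sinh u`,
where `u = O(x^{1+α})`; expanding `e^{-u}` and `sinh u` to first order determines `Φ` and `F`
up to `O(x^{2+3α/2})`. Splitting the Green integral at `ρ = x` gives
`(1+α) Ψ(x) = F(x) (‖Φ‖² - ∫₀ˣ Φ²) + Φ(x) ∫₀ˣ F Φ`, and since `∫₀ˣ Φ² = O(x^{1-α})` and
`F Φ ≤ ρ`, only `‖Φ‖² F(x)` contributes to `Ψ` beyond `O(x^{2-α/2})`. For `0 < α < 1` every error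
exponent exceeds `3/2`, and both limits are read off from the resulting expansion of `g`.
-/

open MeasureTheory Filter Topology Asymptotics

/-- The function `Φ_{α,k}(x) = √(π(1+α)/(2|k|)) · x^{−α/2} · exp(−|k|x^{1+α}/(1+α))`. -/
noncomputable def PhiG (α : ℝ) (k : ℤ) (x : ℝ) : ℝ :=
  Real.sqrt (Real.pi * (1 + α) / (2 * |(k : ℝ)|)) * x ^ (-(α / 2)) *
    Real.exp (-(|(k : ℝ)| * x ^ (1 + α) / (1 + α)))

/-- The function `F_{α,k}(x) = √(2(1+α)/(π|k|)) · x^{−α/2} · sinh(|k|x^{1+α}/(1+α))`. -/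
noncomputable def FG (α : ℝ) (k : ℤ) (x : ℝ) : ℝ :=
  Real.sqrt (2 * (1 + α) / (Real.pi * |(k : ℝ)|)) * x ^ (-(α / 2)) *
    Real.sinh (|(k : ℝ)| * x ^ (1 + α) / (1 + α))

/-- The Green kernel `G_{α,k}(r,ρ)`, equal to `(1+α)⁻¹ Φ_{α,k}(r) F_{α,k}(ρ)` for `ρ < r`
and to `(1+α)⁻¹ F_{α,k}(r) Φ_{α,k}(ρ)` for `r ≤ ρ`. -/
noncomputable def GreenG (α : ℝ) (k : ℤ) (r ρ : ℝ) : ℝ :=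
  if ρ < r then (1 + α)⁻¹ * PhiG α k r * FG α k ρ else (1 + α)⁻¹ * FG α k r * PhiG α k ρ

/-- The function `Ψ_{α,k}(x) = ∫₀^∞ G_{α,k}(x,ρ) Φ_{α,k}(ρ) dρ`. -/
noncomputable def PsiG (α : ℝ) (k : ℤ) (x : ℝ) : ℝ :=
  ∫ ρ in Set.Ioi (0 : ℝ), GreenG α k x ρ * PhiG α k ρ

open Set

lemma tendsto_rpow_nhdsGT_zero {c : ℝ} (hc : 0 < c) :
    Tendsto (fun x : ℝ => x ^ c) (𝓝[>] 0) (𝓝 0) := by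
  simpa [Real.zero_rpow hc.ne'] using
    (Real.continuousAt_rpow_const 0 c (Or.inr hc.le)).tendsto.mono_left nhdsWithin_le_nhds

lemma isLittleO_rpow_nhdsGT_zero {p q : ℝ} (h : q < p) :
    (fun x : ℝ => x ^ p) =o[𝓝[>] 0] fun x => x ^ q := by
  refine (isLittleO_iff_tendsto' ?_).mpr ((tendsto_rpow_nhdsGT_zero (sub_pos.mpr h)).congr' ?_)
  · filter_upwards [self_mem_nhdsWithin] with x hx h0
    exact absurd h0 (Real.rpow_pos_of_pos hx q).ne'
  · filter_upwards [self_mem_nhdsWithin] with x hx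
    exact Real.rpow_sub hx p q

lemma Asymptotics.IsBigO.mul_rpow {𝕜 : Type*} [NormedField 𝕜] {f g : ℝ → 𝕜} {a b c : ℝ}
    (hf : f =O[𝓝[>] 0] fun x => x ^ a) (hg : g =O[𝓝[>] 0] fun x => x ^ b) (habc : a + b = c) :
    (fun x => f x * g x) =O[𝓝[>] 0] fun x => x ^ c := by
  refine (hf.mul hg).trans_eventuallyEq ?_
  filter_upwards [self_mem_nhdsWithin] with x hx
  rw [← habc, Real.rpow_add hx]

lemma tendsto_rpow_mul_of_isBigO {g : ℝ → ℂ} {a : ℂ} {p q : ℝ} (hpq : -p < q)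
    (h : (fun x => g x - a * ((x ^ (-p) : ℝ) : ℂ)) =O[𝓝[>] 0] fun x => x ^ q) :
    Tendsto (fun x => ((x ^ p : ℝ) : ℂ) * g x) (𝓝[>] 0) (𝓝 a) := by
  have hrem : Tendsto (fun x => ((x ^ p : ℝ) : ℂ) * (g x - a * ((x ^ (-p) : ℝ) : ℂ)))
      (𝓝[>] 0) (𝓝 0) :=
    ((Complex.isBigO_ofReal_left.mpr (isBigO_refl _ _)).mul_rpow h rfl).trans_tendsto
      (tendsto_rpow_nhdsGT_zero (by linarith))
  refine (add_zero a ▸ hrem.const_add a).congr' ?_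
  filter_upwards [self_mem_nhdsWithin] with x hx
  have hinv : ((x ^ p : ℝ) : ℂ) * ((x ^ (-p) : ℝ) : ℂ) = 1 := by
    rw [← Complex.ofReal_mul, ← Real.rpow_add hx, add_neg_cancel, Real.rpow_zero,
      Complex.ofReal_one]
  linear_combination -a * hinv

lemma Real.exp_sub_one_sub_id_isBigO_sq :
    (fun v : ℝ => Real.exp v - 1 - v) =O[𝓝 0] fun v => v ^ 2 := by
  refine IsBigO.of_bound 1 ?_
  filter_upwards [Metric.closedBall_mem_nhds (0 : ℝ) one_pos] with v hv
  rw [one_mul, norm_pow]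
  exact Real.norm_exp_sub_one_sub_id_le (by simpa using hv)

lemma Real.sinh_sub_id_isBigO_sq :
    (fun v : ℝ => Real.sinh v - v) =O[𝓝 0] fun v => v ^ 2 := by
  have hneg : (fun v : ℝ => Real.exp (-v) - 1 - -v) =O[𝓝 0] fun v => v ^ 2 := by
    refine (Real.exp_sub_one_sub_id_isBigO_sq.comp_tendsto
      (continuous_neg.tendsto' 0 0 neg_zero)).congr_right fun v => ?_
    simp
  refine ((Real.exp_sub_one_sub_id_isBigO_sq.sub hneg).const_mul_left 2⁻¹).congr_left fun v => ?_
  rw [Real.sinh_eq]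
  ring

lemma Real.sinh_mul_exp_neg_le (u : ℝ) : Real.sinh u * Real.exp (-u) ≤ u := by
  have h : Real.sinh u * Real.exp (-u) = (1 - Real.exp (-(2 * u))) / 2 := by
    have hinv : Real.exp u * Real.exp (-u) = 1 := by
      rw [← Real.exp_add, add_neg_cancel, Real.exp_zero]
    rw [Real.sinh_eq, show -(2 * u) = -u + -u by ring, Real.exp_add]
    linear_combination hinv / 2
  linarith [Real.add_one_le_exp (-(2 * u))]

lemma setIntegral_Ioi_eq_Ioo_add_Ici {E : Type*} [NormedAddCommGroup E] [NormedSpace ℝ E]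
    {f : ℝ → E} {a b : ℝ} (hab : a < b) (hIoo : IntegrableOn f (Ioo a b))
    (hIci : IntegrableOn f (Ici b)) :
    ∫ x in Ioi a, f x = (∫ x in Ioo a b, f x) + ∫ x in Ici b, f x := by
  rw [← Ioo_union_Ici_eq_Ioi hab,
    setIntegral_union ((Iio_disjoint_Ici le_rfl).mono_left Ioo_subset_Iio_self)
      measurableSet_Ici hIoo hIci]

noncomputable def phiCoeff (α : ℝ) (k : ℤ) : ℝ := Real.sqrt (Real.pi * (1 + α) / (2 * |(k : ℝ)|))

noncomputable def fCoeff (α : ℝ) (k : ℤ) : ℝ := Real.sqrt (2 * (1 + α) / (Real.pi * |(k : ℝ)|))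

noncomputable def phase (α : ℝ) (k : ℤ) (x : ℝ) : ℝ := |(k : ℝ)| * x ^ (1 + α) / (1 + α)

section GreenFunction

variable {α : ℝ} {k : ℤ} {x : ℝ}

lemma PhiG_eq : PhiG α k x = phiCoeff α k * x ^ (-(α / 2)) * Real.exp (-phase α k x) := rfl

lemma FG_eq : FG α k x = fCoeff α k * x ^ (-(α / 2)) * Real.sinh (phase α k x) := rfl

lemma phiCoeff_mul_abs_div (hα : -1 < α) (hk : k ≠ 0) :
    phiCoeff α k * (|(k : ℝ)| / (1 + α)) = Real.sqrt (Real.pi * |(k : ℝ)| / (2 * (1 + α))) := by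
  have hK : 0 < |(k : ℝ)| := by positivity
  have h1α : 0 < 1 + α := by linarith
  rw [phiCoeff, ← Real.sqrt_sq (div_pos hK h1α).le, ← Real.sqrt_mul (by positivity)]
  congr 1
  field_simp

lemma inv_mul_fCoeff_mul_abs_div (hα : -1 < α) (hk : k ≠ 0) :
    (1 + α)⁻¹ * fCoeff α k * (|(k : ℝ)| / (1 + α)) =
      Real.sqrt (2 * |(k : ℝ)| / (Real.pi * (1 + α) ^ 3)) := by
  have hK : 0 < |(k : ℝ)| := by positivity
  have h1α : 0 < 1 + α := by linarith
  rw [fCoeff, ← Real.sqrt_sq (inv_pos.mpr h1α).le, ← Real.sqrt_sq (div_pos hK h1α).le,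
    ← Real.sqrt_mul (by positivity), ← Real.sqrt_mul (by positivity)]
  congr 1
  field_simp

/-- The Wronskian normalisation `W(Φ, F) = 1 + α` behind the factor `(1 + α)⁻¹` in `GreenG`. -/
lemma fCoeff_mul_phiCoeff_mul_abs_div (hα : -1 < α) (hk : k ≠ 0) :
    fCoeff α k * phiCoeff α k * (|(k : ℝ)| / (1 + α)) = 1 := by
  have hK : 0 < |(k : ℝ)| := by positivity
  have h1α : 0 < 1 + α := by linarith
  rw [fCoeff, phiCoeff, ← Real.sqrt_mul (by positivity), ← Real.sqrt_sq (div_pos hK h1α).le,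
    ← Real.sqrt_mul (by positivity), Real.sqrt_eq_one]
  field_simp

lemma phase_nonneg (hα : -1 < α) (hx : 0 ≤ x) : 0 ≤ phase α k x := by
  have h1α : 0 < 1 + α := by linarith
  unfold phase
  positivity

lemma phase_eq_mul_rpow : phase α k x = |(k : ℝ)| / (1 + α) * x ^ (1 + α) := by
  rw [phase]
  ring

lemma rpow_mul_phase (hx : 0 < x) :
    x ^ (-(α / 2)) * phase α k x = |(k : ℝ)| / (1 + α) * x ^ (1 + α / 2) := by
  rw [phase_eq_mul_rpow, mul_left_comm, ← Real.rpow_add hx]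
  ring_nf

lemma tendsto_phase (hα : -1 < α) : Tendsto (phase α k) (𝓝[>] 0) (𝓝 0) := by
  have h := (tendsto_rpow_nhdsGT_zero (by linarith : 0 < 1 + α)).const_mul (|(k : ℝ)| / (1 + α))
  rw [mul_zero] at h
  exact h.congr fun x => phase_eq_mul_rpow.symm

lemma phase_sq_isBigO :
    (fun x => phase α k x ^ 2) =O[𝓝[>] 0] fun x => x ^ (2 + 2 * α) := by
  have h : phase α k =O[𝓝[>] 0] fun x => x ^ (1 + α) :=
    (isBigO_const_mul_self _ _ _).congr_left fun x => phase_eq_mul_rpow.symm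
  simpa only [sq] using h.mul_rpow h (by ring)

lemma exp_neg_phase_sub_isBigO (hα : -1 < α) :
    (fun x => Real.exp (-phase α k x) - 1 + phase α k x) =O[𝓝[>] 0]
      fun x => x ^ (2 + 2 * α) := by
  refine ((Real.exp_sub_one_sub_id_isBigO_sq.comp_tendsto
    (by simpa using (tendsto_phase (k := k) hα).neg)).congr (fun x => ?_) fun x => ?_).trans
    (phase_sq_isBigO (k := k))
  · simp [sub_neg_eq_add]
  · simp

lemma sinh_phase_sub_isBigO (hα : -1 < α) :
    (fun x => Real.sinh (phase α k x) - phase α k x) =O[𝓝[>] 0] fun x => x ^ (2 + 2 * α) :=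
  (Real.sinh_sub_id_isBigO_sq.comp_tendsto (tendsto_phase hα)).trans phase_sq_isBigO

lemma measurable_PhiG : Measurable (PhiG α k) := by
  unfold PhiG
  fun_prop

lemma measurable_FG : Measurable (FG α k) := by
  unfold FG
  fun_prop

lemma PhiG_nonneg (hx : 0 ≤ x) : 0 ≤ PhiG α k x := by
  have := Real.rpow_nonneg hx (-(α / 2))
  rw [PhiG_eq, phiCoeff]
  positivity

lemma FG_nonneg (hα : -1 < α) (hx : 0 ≤ x) : 0 ≤ FG α k x := by
  have := Real.rpow_nonneg hx (-(α / 2))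
  have := Real.sinh_nonneg_iff.mpr (phase_nonneg (k := k) hα hx)
  rw [FG_eq, fCoeff]
  positivity

lemma PhiG_le (hα : -1 < α) (hx : 0 ≤ x) : PhiG α k x ≤ phiCoeff α k * x ^ (-(α / 2)) := by
  have := Real.rpow_nonneg hx (-(α / 2))
  rw [PhiG_eq]
  exact mul_le_of_le_one_right (by rw [phiCoeff]; positivity)
    (Real.exp_le_one_iff.mpr (neg_nonpos.mpr (phase_nonneg hα hx)))

lemma norm_FG_mul_PhiG_le (hα : -1 < α) (hk : k ≠ 0) (hx : 0 < x) :
    ‖FG α k x * PhiG α k x‖ ≤ x := by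
  set c := fCoeff α k * phiCoeff α k * x ^ (-(α / 2)) * x ^ (-(α / 2))
  have hc : 0 ≤ c := by
    have := Real.rpow_nonneg hx.le (-(α / 2))
    simp only [c, fCoeff, phiCoeff]
    positivity
  rw [Real.norm_of_nonneg (mul_nonneg (FG_nonneg hα hx.le) (PhiG_nonneg hx.le))]
  calc FG α k x * PhiG α k x
      = c * (Real.sinh (phase α k x) * Real.exp (-phase α k x)) := by
        rw [FG_eq, PhiG_eq]
        ring
    _ ≤ c * phase α k x := mul_le_mul_of_nonneg_left (Real.sinh_mul_exp_neg_le _) hc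
    _ = fCoeff α k * phiCoeff α k * (|(k : ℝ)| / (1 + α)) * (x ^ (-(α / 2)) * x ^ (1 + α / 2)) := by
        linear_combination (fCoeff α k * phiCoeff α k * x ^ (-(α / 2))) *
          rpow_mul_phase (α := α) (k := k) hx
    _ = x := by
        rw [fCoeff_mul_phiCoeff_mul_abs_div hα hk, ← Real.rpow_add hx]
        ring_nf
        exact Real.rpow_one x

lemma PhiG_sq_eq (hx : 0 < x) :
    PhiG α k x ^ 2 =
      phiCoeff α k ^ 2 * (x ^ (-α) * Real.exp (-(2 * |(k : ℝ)| / (1 + α)) * x ^ (1 + α))) := by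
  rw [PhiG_eq, mul_pow, mul_pow, ← Real.rpow_mul_natCast hx.le, ← Real.exp_nat_mul,
    phase_eq_mul_rpow]
  ring_nf

lemma integrableOn_PhiG_sq (hα0 : -1 < α) (hα1 : α < 1) (hk : k ≠ 0) :
    IntegrableOn (fun ρ => PhiG α k ρ ^ 2) (Ioi 0) := by
  have hb : 0 < 2 * |(k : ℝ)| / (1 + α) := div_pos (by positivity) (by linarith)
  refine IntegrableOn.congr_fun ?_ (fun ρ hρ => (PhiG_sq_eq hρ).symm) measurableSet_Ioi
  exact (integrableOn_rpow_mul_exp_neg_mul_rpow (by linarith) (by linarith) hb).const_mul _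

lemma integral_PhiG_sq_isBigO (hα0 : -1 < α) (hα1 : α < 1) :
    (fun x => ∫ ρ in Ioo 0 x, PhiG α k ρ ^ 2) =O[𝓝[>] 0] fun x => x ^ (1 - α) := by
  refine IsBigO.of_bound (phiCoeff α k ^ 2 / (1 - α)) ?_
  filter_upwards [self_mem_nhdsWithin] with x (hx : 0 < x)
  have hrpow : IntegrableOn (fun ρ : ℝ => ρ ^ (-α)) (Ioo 0 x) :=
    (intervalIntegral.integrableOn_Ioo_rpow_iff hx).mpr (by linarith)
  have hle : ∀ ρ ∈ Ioo 0 x, ‖PhiG α k ρ ^ 2‖ ≤ phiCoeff α k ^ 2 * ρ ^ (-α) := fun ρ hρ => by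
    rw [Real.norm_of_nonneg (sq_nonneg _), PhiG_sq_eq hρ.1]
    refine mul_le_mul_of_nonneg_left (mul_le_of_le_one_right (Real.rpow_nonneg hρ.1.le _) ?_)
      (sq_nonneg _)
    have hb : 0 ≤ 2 * |(k : ℝ)| / (1 + α) := div_nonneg (by positivity) (by linarith)
    rw [Real.exp_le_one_iff, neg_mul, neg_nonpos]
    exact mul_nonneg hb (Real.rpow_nonneg hρ.1.le _)
  have hint : ∫ ρ in Ioo 0 x, ρ ^ (-α) = x ^ (1 - α) / (1 - α) := by
    rw [← integral_Ioc_eq_integral_Ioo, ← intervalIntegral.integral_of_le hx.le,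
      integral_rpow (Or.inl (by linarith)), Real.zero_rpow (by linarith), neg_add_eq_sub]
    ring
  calc ‖∫ ρ in Ioo 0 x, PhiG α k ρ ^ 2‖
      ≤ ∫ ρ in Ioo 0 x, phiCoeff α k ^ 2 * ρ ^ (-α) :=
        norm_integral_le_of_norm_le (hrpow.const_mul _)
          ((ae_restrict_iff' measurableSet_Ioo).mpr (Eventually.of_forall hle))
    _ = phiCoeff α k ^ 2 / (1 - α) * ‖x ^ (1 - α)‖ := by
        rw [integral_const_mul, hint, Real.norm_of_nonneg (Real.rpow_nonneg hx.le _)]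
        ring

lemma integrableOn_FG_mul_PhiG (hα : -1 < α) (hk : k ≠ 0) :
    IntegrableOn (fun ρ => FG α k ρ * PhiG α k ρ) (Ioo 0 x) :=
  Measure.integrableOn_of_bounded measure_Ioo_lt_top.ne
    (measurable_FG.mul measurable_PhiG).aestronglyMeasurable
    ((ae_restrict_iff' measurableSet_Ioo).mpr (Eventually.of_forall fun _ hρ =>
      (norm_FG_mul_PhiG_le hα hk hρ.1).trans hρ.2.le))

lemma integral_FG_mul_PhiG_isBigO (hα : -1 < α) (hk : k ≠ 0) :
    (fun x => ∫ ρ in Ioo 0 x, FG α k ρ * PhiG α k ρ) =O[𝓝[>] 0] fun x => x ^ (2 : ℝ) := by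
  refine IsBigO.of_bound 1 ?_
  filter_upwards [self_mem_nhdsWithin] with x (hx : 0 < x)
  calc ‖∫ ρ in Ioo 0 x, FG α k ρ * PhiG α k ρ‖
      ≤ x * volume.real (Ioo 0 x) := norm_setIntegral_le_of_norm_le_const measure_Ioo_lt_top
        fun ρ hρ => (norm_FG_mul_PhiG_le hα hk hρ.1).trans hρ.2.le
    _ = 1 * ‖x ^ (2 : ℝ)‖ := by
        rw [Real.volume_real_Ioo_of_le hx.le, Real.norm_of_nonneg (by positivity), Real.rpow_two]
        ring

lemma PsiG_eq (hα0 : -1 < α) (hα1 : α < 1) (hk : k ≠ 0) (hx : 0 < x) :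
    PsiG α k x = (1 + α)⁻¹ *
      (FG α k x * ((∫ ρ in Ioi 0, PhiG α k ρ ^ 2) - ∫ ρ in Ioo 0 x, PhiG α k ρ ^ 2) +
        PhiG α k x * ∫ ρ in Ioo 0 x, FG α k ρ * PhiG α k ρ) := by
  have hsq := integrableOn_PhiG_sq hα0 hα1 hk
  have hIoo : ∀ ρ ∈ Ioo 0 x, GreenG α k x ρ * PhiG α k ρ =
      (1 + α)⁻¹ * PhiG α k x * (FG α k ρ * PhiG α k ρ) := fun ρ hρ => by
    rw [GreenG, if_pos hρ.2]
    ring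
  have hIci : ∀ ρ ∈ Ici x, GreenG α k x ρ * PhiG α k ρ =
      (1 + α)⁻¹ * FG α k x * PhiG α k ρ ^ 2 := fun ρ hρ => by
    rw [GreenG, if_neg (not_lt.mpr hρ)]
    ring
  rw [PsiG, setIntegral_Ioi_eq_Ioo_add_Ici hx
      (IntegrableOn.congr_fun ((integrableOn_FG_mul_PhiG hα0 hk).const_mul _)
        (fun ρ hρ => (hIoo ρ hρ).symm) measurableSet_Ioo)
      (IntegrableOn.congr_fun ((hsq.mono_set (Ici_subset_Ioi.mpr hx)).const_mul _)
        (fun ρ hρ => (hIci ρ hρ).symm) measurableSet_Ici),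
    setIntegral_congr_fun measurableSet_Ioo hIoo, setIntegral_congr_fun measurableSet_Ici hIci,
    integral_const_mul, integral_const_mul, setIntegral_Ioi_eq_Ioo_add_Ici hx
      (hsq.mono_set Ioo_subset_Ioi_self) (hsq.mono_set (Ici_subset_Ioi.mpr hx))]
  ring

lemma PhiG_sub_isBigO (hα : -1 < α) (hk : k ≠ 0) :
    (fun x => PhiG α k x - phiCoeff α k * x ^ (-(α / 2)) +
        Real.sqrt (Real.pi * |(k : ℝ)| / (2 * (1 + α))) * x ^ (1 + α / 2))
      =O[𝓝[>] 0] fun x => x ^ (2 + 3 * α / 2) := by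
  refine (((isBigO_refl (fun x : ℝ => x ^ (-(α / 2))) _).mul_rpow
    (exp_neg_phase_sub_isBigO (k := k) hα) (by ring)).const_mul_left (phiCoeff α k)).congr' ?_
    EventuallyEq.rfl
  filter_upwards [self_mem_nhdsWithin] with x (hx : 0 < x)
  rw [PhiG_eq, ← phiCoeff_mul_abs_div hα hk]
  linear_combination phiCoeff α k * rpow_mul_phase (α := α) (k := k) hx

lemma FG_sub_isBigO (hα : -1 < α) :
    (fun x => FG α k x - fCoeff α k * (|(k : ℝ)| / (1 + α)) * x ^ (1 + α / 2))
      =O[𝓝[>] 0] fun x => x ^ (2 + 3 * α / 2) := by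
  refine (((isBigO_refl (fun x : ℝ => x ^ (-(α / 2))) _).mul_rpow
    (sinh_phase_sub_isBigO (k := k) hα) (by ring)).const_mul_left (fCoeff α k)).congr' ?_
    EventuallyEq.rfl
  filter_upwards [self_mem_nhdsWithin] with x (hx : 0 < x)
  rw [FG_eq]
  linear_combination -fCoeff α k * rpow_mul_phase (α := α) (k := k) hx

lemma PhiG_isBigO (hα : -1 < α) : PhiG α k =O[𝓝[>] 0] fun x => x ^ (-(α / 2)) := by
  refine IsBigO.of_bound (phiCoeff α k) ?_
  filter_upwards [self_mem_nhdsWithin] with x (hx : 0 < x)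
  rw [Real.norm_of_nonneg (PhiG_nonneg hx.le), Real.norm_of_nonneg (Real.rpow_nonneg hx.le _)]
  exact PhiG_le hα hx.le

lemma FG_isBigO (hα : -1 < α) : FG α k =O[𝓝[>] 0] fun x => x ^ (1 + α / 2) :=
  ((FG_sub_isBigO (k := k) hα).trans (isLittleO_rpow_nhdsGT_zero (by linarith)).isBigO).add
    ((isBigO_refl _ _).const_mul_left (fCoeff α k * (|(k : ℝ)| / (1 + α)))) |>.congr_left
      fun x => by ring

lemma PhiG_sub_isLittleO (hα : 0 < α) (hk : k ≠ 0) :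
    (fun x => PhiG α k x - phiCoeff α k * x ^ (-(α / 2)) +
        Real.sqrt (Real.pi * |(k : ℝ)| / (2 * (1 + α))) * x ^ (1 + α / 2))
      =o[𝓝[>] 0] fun x => x ^ ((3 : ℝ) / 2) :=
  (PhiG_sub_isBigO (by linarith) hk).trans_isLittleO (isLittleO_rpow_nhdsGT_zero (by linarith))

lemma PsiG_sub_isLittleO (hα0 : 0 < α) (hα1 : α < 1) (hk : k ≠ 0) :
    (fun x => PsiG α k x - Real.sqrt (2 * |(k : ℝ)| / (Real.pi * (1 + α) ^ 3)) *
        (∫ ρ in Ioi 0, PhiG α k ρ ^ 2) * x ^ (1 + α / 2))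
      =o[𝓝[>] 0] fun x => x ^ ((3 : ℝ) / 2) := by
  have hα : -1 < α := by linarith
  have hF := ((FG_sub_isBigO (k := k) hα).trans_isLittleO
    (isLittleO_rpow_nhdsGT_zero (q := 3 / 2) (by linarith))).const_mul_left
      (∫ ρ in Ioi 0, PhiG α k ρ ^ 2)
  have hF_mul := ((FG_isBigO (k := k) hα).mul_rpow (integral_PhiG_sq_isBigO (k := k) hα hα1)
    (by ring : 1 + α / 2 + (1 - α) = 2 - α / 2)).trans_isLittleO
    (isLittleO_rpow_nhdsGT_zero (q := 3 / 2) (by linarith))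
  have hΦ_mul := ((PhiG_isBigO (k := k) hα).mul_rpow (integral_FG_mul_PhiG_isBigO hα hk)
    (by ring : -(α / 2) + 2 = 2 - α / 2)).trans_isLittleO
    (isLittleO_rpow_nhdsGT_zero (q := 3 / 2) (by linarith))
  refine (((hF.sub hF_mul).add hΦ_mul).const_mul_left (1 + α)⁻¹).congr' ?_ EventuallyEq.rfl
  filter_upwards [self_mem_nhdsWithin] with x (hx : 0 < x)
  rw [PsiG_eq hα hα1 hk hx, ← inv_mul_fCoeff_mul_abs_div hα hk]
  ring

end GreenFunction

/-- For `α ∈ (0,1)`, `k ≠ 0`, `c₀ c₁ ∈ ℂ`, and `φ : (0,∞) → ℂ` with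
`φ(x) = o(x^{3/2})` as `x → 0⁺`, set `g = φ + c₁ Ψ_{α,k} + c₀ Φ_{α,k}`,
`g₀ = c₀ √(π(1+α)/(2|k|))` and
`g₁ = c₁ √(2|k|/(π(1+α)³)) ‖Φ_{α,k}‖²_{L²} − c₀ √(π|k|/(2(1+α)))`.  Then
`x^{α/2} g(x) → g₀`, `x^{−(1+α/2)}(g(x) − g₀ x^{−α/2}) → g₁`, and
`g(x) = g₀ x^{−α/2} + g₁ x^{1+α/2} + o(x^{3/2})` as `x → 0⁺`. -/
theorem adjoint_domain_element_asymptotics (α : ℝ) (hα0 : 0 < α) (hα1 : α < 1)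
    (k : ℤ) (hk : k ≠ 0) (c₀ c₁ : ℂ) (φ : ℝ → ℂ)
    (hφ : (fun x : ℝ => φ x) =o[𝓝[>] 0] fun x : ℝ => x ^ ((3 : ℝ) / 2)) :
    Tendsto
      (fun x : ℝ => ((x ^ (α / 2) : ℝ) : ℂ) *
        (φ x + c₁ * (PsiG α k x : ℂ) + c₀ * (PhiG α k x : ℂ)))
      (𝓝[>] 0)
      (𝓝 (c₀ * (Real.sqrt (Real.pi * (1 + α) / (2 * |(k : ℝ)|)) : ℂ))) ∧
    Tendsto
      (fun x : ℝ => ((x ^ (-(1 + α / 2)) : ℝ) : ℂ) *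
        ((φ x + c₁ * (PsiG α k x : ℂ) + c₀ * (PhiG α k x : ℂ)) -
          c₀ * (Real.sqrt (Real.pi * (1 + α) / (2 * |(k : ℝ)|)) : ℂ) *
            ((x ^ (-(α / 2)) : ℝ) : ℂ)))
      (𝓝[>] 0)
      (𝓝 (c₁ * (Real.sqrt (2 * |(k : ℝ)| / (Real.pi * (1 + α) ^ 3)) : ℂ) *
            ((∫ ρ in Set.Ioi (0 : ℝ), PhiG α k ρ ^ 2 : ℝ) : ℂ) -
          c₀ * (Real.sqrt (Real.pi * |(k : ℝ)| / (2 * (1 + α))) : ℂ))) ∧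
    ((fun x : ℝ =>
        (φ x + c₁ * (PsiG α k x : ℂ) + c₀ * (PhiG α k x : ℂ)) -
          c₀ * (Real.sqrt (Real.pi * (1 + α) / (2 * |(k : ℝ)|)) : ℂ) *
            ((x ^ (-(α / 2)) : ℝ) : ℂ) -
          (c₁ * (Real.sqrt (2 * |(k : ℝ)| / (Real.pi * (1 + α) ^ 3)) : ℂ) *
              ((∫ ρ in Set.Ioi (0 : ℝ), PhiG α k ρ ^ 2 : ℝ) : ℂ) -
            c₀ * (Real.sqrt (Real.pi * |(k : ℝ)| / (2 * (1 + α))) : ℂ)) *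
            ((x ^ (1 + α / 2) : ℝ) : ℂ))
      =o[𝓝[>] 0] fun x : ℝ => x ^ ((3 : ℝ) / 2)) := by
  set g₀ : ℂ := c₀ * (Real.sqrt (Real.pi * (1 + α) / (2 * |(k : ℝ)|)) : ℂ)
  set g₁ : ℂ := c₁ * (Real.sqrt (2 * |(k : ℝ)| / (Real.pi * (1 + α) ^ 3)) : ℂ) *
      ((∫ ρ in Set.Ioi (0 : ℝ), PhiG α k ρ ^ 2 : ℝ) : ℂ) -
    c₀ * (Real.sqrt (Real.pi * |(k : ℝ)| / (2 * (1 + α))) : ℂ)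
  refine (fun hrem => ⟨?leading, ?subleading, hrem⟩) ?remainder
  case remainder =>
    refine ((hφ.add ((Complex.isLittleO_ofReal_left.mpr
      (PsiG_sub_isLittleO hα0 hα1 hk)).const_mul_left c₁)).add
      ((Complex.isLittleO_ofReal_left.mpr
        (PhiG_sub_isLittleO hα0 hk)).const_mul_left c₀)).congr_left fun x => ?_
    simp only [g₀, g₁, phiCoeff]
    push_cast
    ring
  case leading =>
    have hpow : (fun x : ℝ => ((x ^ (1 + α / 2) : ℝ) : ℂ)) =O[𝓝[>] 0] fun x => x ^ (1 + α / 2) :=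
      Complex.isBigO_ofReal_left.mpr (isBigO_refl _ _)
    refine tendsto_rpow_mul_of_isBigO (q := 1 + α / 2) (by linarith)
      (((hrem.isBigO.trans (isLittleO_rpow_nhdsGT_zero (by linarith)).isBigO).add
        (hpow.const_mul_left g₁)).congr_left fun x => ?_)
    ring
  case subleading =>
    exact tendsto_rpow_mul_of_isBigO (q := 3 / 2) (by linarith)
      (by simpa only [neg_neg] using hrem.isBigO)
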